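/- Let γ ≥ 0 and 1 ≤ p ≤ ∞. Let V : ℝ → ℝ be measurable with Q := ∫_ℝ ⟨y⟩^γ |V(y)| dy < ∞, and let g ∈ L^p(ℝ). Define (Sg)(x) := ∫_x^∞ V(y) g(x − 2y) dy for x ≥ −1 and (Sg)(x) := 0 for x < −1. Then ⟨x⟩^γ (Sg)(x) ∈ L^p(ℝ) with ‖ ⟨x⟩^γ Sg ‖_{L^p(ℝ)} ≤ 2^{γ/2} Q ‖g‖_{L^p(ℝ)}. -/

import Mathlib

open MeasureTheory
open scoped ENNReal NNReal

noncomputable section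

private lemma weight_key {γ x y : ℝ} (hγ : 0 ≤ γ) (hx : -1 ≤ x) (hxy : x ≤ y) :
    Real.sqrt (1 + x ^ 2) ^ γ ≤ 2 ^ (γ / 2) * Real.sqrt (1 + y ^ 2) ^ γ := by
  have hx2 : x ^ 2 ≤ 1 + y ^ 2 := by
    rcases le_or_gt x 1 with h | h
    · nlinarith [sq_nonneg y]
    · nlinarith
  have h1 : Real.sqrt (1 + x ^ 2) ≤ Real.sqrt 2 * Real.sqrt (1 + y ^ 2) := by
    rw [← Real.sqrt_mul (by norm_num)]
    exact Real.sqrt_le_sqrt (by nlinarith)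
  calc Real.sqrt (1 + x ^ 2) ^ γ
      ≤ (Real.sqrt 2 * Real.sqrt (1 + y ^ 2)) ^ γ :=
        Real.rpow_le_rpow (Real.sqrt_nonneg _) h1 hγ
    _ = Real.sqrt 2 ^ γ * Real.sqrt (1 + y ^ 2) ^ γ :=
        Real.mul_rpow (Real.sqrt_nonneg _) (Real.sqrt_nonneg _)
    _ = 2 ^ (γ / 2) * Real.sqrt (1 + y ^ 2) ^ γ := by
        rw [show Real.sqrt 2 = (2:ℝ) ^ (1/2 : ℝ) from Real.sqrt_eq_rpow 2,
          ← Real.rpow_mul (by norm_num)]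
        exact congrArg (· * Real.sqrt (1 + y ^ 2) ^ γ) (by ring_nf)

private lemma qmp_aux (x : ℝ) :
    MeasureTheory.Measure.QuasiMeasurePreserving (fun y : ℝ => x - 2 * y) volume volume := by
  have h1 : MeasureTheory.Measure.QuasiMeasurePreserving (fun y : ℝ => 2 * y) volume volume := by
    refine ⟨measurable_const_mul 2, ?_⟩
    rw [show (fun y : ℝ => 2 * y) = (2 * ·) from rfl, Real.map_volume_mul_left (by norm_num)]
    exact MeasureTheory.Measure.smul_absolutelyContinuous
  have h2 : MeasureTheory.Measure.QuasiMeasurePreserving (fun z : ℝ => x - z) volume volume :=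
    (Measure.measurePreserving_sub_left volume x).quasiMeasurePreserving
  exact h2.comp h1

private lemma sm_aux {V : ℝ → ℝ} (hVmeas : Measurable V) {g : ℝ → ℂ} (hgm : Measurable g)
    (γ : ℝ) :
    StronglyMeasurable (fun x : ℝ =>
      (Real.sqrt (1 + x ^ 2) ^ γ : ℝ) •
        (if -1 ≤ x then ∫ y in Set.Ioi x, (V y : ℂ) * g (x - 2 * y) else 0)) := by
  have hk : Measurable (fun q : ℝ × ℝ =>
      if q.1 < q.2 then (V q.2 : ℂ) * g (q.1 - 2 * q.2) else 0) := by
    refine Measurable.ite (measurableSet_lt measurable_fst measurable_snd) ?_ measurable_const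
    exact (Complex.measurable_ofReal.comp (hVmeas.comp measurable_snd)).mul
      (hgm.comp (measurable_fst.sub (measurable_snd.const_mul 2)))
  have hinner : StronglyMeasurable (fun x : ℝ =>
      ∫ y in Set.Ioi x, (V y : ℂ) * g (x - 2 * y)) := by
    have h1 : (fun x : ℝ => ∫ y in Set.Ioi x, (V y : ℂ) * g (x - 2 * y)) =
        fun x : ℝ => ∫ y, (fun q : ℝ × ℝ =>
          if q.1 < q.2 then (V q.2 : ℂ) * g (q.1 - 2 * q.2) else 0) (x, y) := by
      funext x
      rw [← integral_indicator measurableSet_Ioi]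
      refine integral_congr_ae (Filter.Eventually.of_forall fun y => ?_)
      simp [Set.indicator_apply, Set.mem_Ioi]
    rw [h1]
    exact hk.stronglyMeasurable.integral_prod_right'
  have hw : StronglyMeasurable (fun x : ℝ => Real.sqrt (1 + x ^ 2) ^ γ) :=
    ((measurable_const.add (measurable_id.pow_const 2)).sqrt.pow measurable_const).stronglyMeasurable
  exact hw.smul (hinner.ite (measurableSet_le measurable_const measurable_id)
    stronglyMeasurable_const)

private lemma core {γ : ℝ} (hγ : 0 ≤ γ) {p : ENNReal} (hp : 1 ≤ p) {V : ℝ → ℝ}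
    (hVmeas : Measurable V)
    (hVint : Integrable (fun y => Real.sqrt (1 + y ^ 2) ^ γ * |V y|))
    {g : ℝ → ℂ} (hgm : Measurable g) :
    eLpNorm (fun x : ℝ =>
        (Real.sqrt (1 + x ^ 2) ^ γ : ℝ) •
          (if -1 ≤ x then ∫ y in Set.Ioi x, (V y : ℂ) * g (x - 2 * y) else 0)) p volume ≤
      ENNReal.ofReal ((2:ℝ) ^ (γ / 2) * ∫ y, Real.sqrt (1 + y ^ 2) ^ γ * |V y|) *
        eLpNorm g p volume := by
  classical
  set w : ℝ → ℝ := fun x => Real.sqrt (1 + x ^ 2) ^ γ with hw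
  have hwnn : ∀ x : ℝ, (0:ℝ) ≤ w x := fun x => Real.rpow_nonneg (Real.sqrt_nonneg _) _
  have hwmeas : Measurable w :=
    (measurable_const.add (measurable_id.pow_const 2)).sqrt.pow measurable_const
  set C : ℝ := (2:ℝ) ^ (γ / 2) with hC
  have hCpos : (0:ℝ) < C := Real.rpow_pos_of_pos two_pos _
  set f : ℝ → ℝ≥0∞ := fun y => ENNReal.ofReal (C * (w y * |V y|)) with hf
  have hfmeas : Measurable f :=
    ENNReal.measurable_ofReal.comp ((hwmeas.mul hVmeas.abs).const_mul C)
  have hfne : ∀ y, f y ≠ ∞ := fun y => ENNReal.ofReal_ne_top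
  set G : ℝ → ℝ≥0∞ := fun z => (‖g z‖₊ : ℝ≥0∞) with hG
  have hGmeas : Measurable G := hgm.enorm
  set A : ℝ≥0∞ := ∫⁻ y, f y with hA
  have hAne : A ≠ ∞ := by
    rw [hA, ← ofReal_integral_eq_lintegral_ofReal (hVint.const_mul C)
      (Filter.Eventually.of_forall fun y =>
        mul_nonneg hCpos.le (mul_nonneg (hwnn y) (abs_nonneg _)))]
    exact ENNReal.ofReal_ne_top
  have hAeq : A = ENNReal.ofReal (C * ∫ y, Real.sqrt (1 + y ^ 2) ^ γ * |V y|) := by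
    rw [hA, ← ofReal_integral_eq_lintegral_ofReal (hVint.const_mul C)
      (Filter.Eventually.of_forall fun y =>
        mul_nonneg hCpos.le (mul_nonneg (hwnn y) (abs_nonneg _))), show (fun y : ℝ => C * (w y * |V y|)) = fun y : ℝ => C • (w y * |V y|) from rfl,
      integral_smul, smul_eq_mul]
  -- the kernel and Φ
  have hker : Measurable (fun q : ℝ × ℝ => f q.2 * G (q.1 - 2 * q.2)) :=
    (hfmeas.comp measurable_snd).mul
      (hGmeas.comp (measurable_fst.sub (measurable_snd.const_mul 2)))
  set Φ : ℝ → ℝ≥0∞ := fun x => ∫⁻ y, f y * G (x - 2 * y) with hΦ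
  -- pointwise domination
  have key : ∀ x : ℝ,
      (‖(w x) • (if -1 ≤ x then ∫ y in Set.Ioi x, (V y : ℂ) * g (x - 2 * y) else 0)‖₊ : ℝ≥0∞)
        ≤ Φ x := by
    intro x
    by_cases hx : -1 ≤ x
    · simp only [if_pos hx]
      have h1 : (‖(w x) • (∫ y in Set.Ioi x, (V y : ℂ) * g (x - 2 * y))‖₊ : ℝ≥0∞)
          = ENNReal.ofReal (w x) * ‖∫ y in Set.Ioi x, (V y : ℂ) * g (x - 2 * y)‖₊ := by
        rw [nnnorm_smul, ENNReal.coe_mul, ← enorm_eq_nnnorm, Real.enorm_eq_ofReal (hwnn x)]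
      rw [h1]
      calc ENNReal.ofReal (w x) * (‖∫ y in Set.Ioi x, (V y : ℂ) * g (x - 2 * y)‖₊ : ℝ≥0∞)
          ≤ ENNReal.ofReal (w x) *
              ∫⁻ y in Set.Ioi x, (‖(V y : ℂ) * g (x - 2 * y)‖₊ : ℝ≥0∞) :=
            mul_le_mul_right (enorm_integral_le_lintegral_enorm _) _
        _ = ∫⁻ y in Set.Ioi x, ENNReal.ofReal (w x) * (‖(V y : ℂ) * g (x - 2 * y)‖₊ : ℝ≥0∞) :=
            (lintegral_const_mul' _ _ ENNReal.ofReal_ne_top).symm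
        _ ≤ ∫⁻ y in Set.Ioi x, f y * G (x - 2 * y) := by
            refine setLIntegral_mono' measurableSet_Ioi fun y hy => ?_
            have hxy : x ≤ y := le_of_lt hy
            have hnorm : (‖(V y : ℂ) * g (x - 2 * y)‖₊ : ℝ≥0∞)
                = ENNReal.ofReal |V y| * G (x - 2 * y) := by
              rw [nnnorm_mul, ENNReal.coe_mul, Complex.nnnorm_real,
                ← enorm_eq_nnnorm, Real.enorm_eq_ofReal_abs]
            rw [hnorm, ← mul_assoc, ← ENNReal.ofReal_mul (hwnn x)]
            refine mul_le_mul_left (ENNReal.ofReal_le_ofReal ?_) _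
            calc w x * |V y| ≤ (C * w y) * |V y| :=
                  mul_le_mul_of_nonneg_right (weight_key hγ hx hxy) (abs_nonneg _)
              _ = C * (w y * |V y|) := by ring
        _ ≤ Φ x := lintegral_mono' Measure.restrict_le_self le_rfl
    · simp only [if_neg hx, smul_zero, nnnorm_zero, ENNReal.coe_zero]
      exact bot_le
  have hp0 : p ≠ 0 := (zero_lt_one.trans_le hp).ne'
  by_cases hptop : p = ∞
  · -- p = ∞
    subst hptop
    rw [eLpNorm_exponent_top, eLpNorm_exponent_top]
    set M : ℝ≥0∞ := eLpNormEssSup g volume with hM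
    have hGM : ∀ᵐ z : ℝ, G z ≤ M := ae_le_eLpNormEssSup
    have hbound : ∀ x : ℝ, Φ x ≤ A * M := by
      intro x
      calc Φ x ≤ ∫⁻ y, f y * M := lintegral_mono_ae
            (((qmp_aux x).ae hGM).mono fun y hy => mul_le_mul_right hy _)
        _ = A * M := lintegral_mul_const _ hfmeas
    rw [hAeq.symm]
    refine essSup_le_of_ae_le _ (Filter.Eventually.of_forall fun x => ?_)
    exact (key x).trans (hbound x)
  · -- p finite
    set r : ℝ := p.toReal with hr
    have hr1 : 1 ≤ r := by
      rw [hr, ← ENNReal.toReal_one]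
      exact (ENNReal.toReal_le_toReal (by simp) hptop).mpr hp
    have hr0 : (0:ℝ) < r := lt_of_lt_of_le zero_lt_one hr1
    set B : ℝ≥0∞ := ∫⁻ z, G z ^ r with hB
    have hgnorm : eLpNorm g p volume = B ^ (1 / r) := by
      rw [eLpNorm_eq_lintegral_rpow_enorm_toReal hp0 hptop]
      rfl
    set Ψ : ℝ → ℝ≥0∞ := fun x => ∫⁻ y, f y * G (x - 2 * y) ^ r with hΨ
    have hker2 : Measurable (fun q : ℝ × ℝ => f q.2 * G (q.1 - 2 * q.2) ^ r) :=
      (hfmeas.comp measurable_snd).mul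
        ((hGmeas.comp (measurable_fst.sub (measurable_snd.const_mul 2))).pow measurable_const)
    have hswap : ∫⁻ x, Ψ x = A * B := by
      rw [hΨ]
      rw [lintegral_lintegral_swap hker2.aemeasurable]
      have h1 : ∀ y : ℝ, (∫⁻ x, f y * G (x - 2 * y) ^ r) = f y * B := by
        intro y
        rw [lintegral_const_mul' _ _ (hfne y)]
        congr 1
        exact (measurePreserving_sub_right volume (2 * y)).lintegral_comp
          (hGmeas.pow measurable_const)
      simp_rw [h1]
      exact lintegral_mul_const _ hfmeas
    have hΦΨ : ∀ x : ℝ, Φ x ^ r ≤ A ^ (r - 1) * Ψ x := by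
      rcases eq_or_lt_of_le hr1 with h1 | h1
      · intro x
        rw [hΦ, hΨ, ← h1]
        simp [ENNReal.rpow_one]
      · intro x
        have hconj : (r / (r - 1)).HolderConjugate r :=
          (Real.HolderConjugate.conjExponent h1).symm
        set q : ℝ := r / (r - 1) with hq
        have hq0 : (0:ℝ) < q := hconj.pos
        set u : ℝ → ℝ≥0∞ := fun y => f y ^ (1 / q) with hu
        set v : ℝ → ℝ≥0∞ := fun y => f y ^ (1 / r) * G (x - 2 * y) with hv
        have humeas : Measurable u := hfmeas.pow measurable_const
        have hvmeas : Measurable v := (hfmeas.pow measurable_const).mul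
          (hGmeas.comp (measurable_const.sub (measurable_id.const_mul 2)))
        have hhold := ENNReal.lintegral_mul_le_Lp_mul_Lq volume hconj
          humeas.aemeasurable hvmeas.aemeasurable
        have huv : ∀ y : ℝ, u y * v y = f y * G (x - 2 * y) := by
          intro y
          rw [hu, hv, ← mul_assoc, ← ENNReal.rpow_add_of_nonneg _ _
            (by positivity) (by positivity)]
          rw [show 1 / q + 1 / r = 1 by
            rw [one_div, one_div]; exact hconj.inv_add_inv_eq_one]
          rw [ENNReal.rpow_one]
        have huq : ∀ y : ℝ, u y ^ q = f y := by
          intro y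
          rw [hu, ← ENNReal.rpow_mul, one_div_mul_cancel hq0.ne', ENNReal.rpow_one]
        have hvr : ∀ y : ℝ, v y ^ r = f y * G (x - 2 * y) ^ r := by
          intro y
          rw [hv, ENNReal.mul_rpow_of_nonneg _ _ hr0.le, ← ENNReal.rpow_mul,
            one_div_mul_cancel hr0.ne', ENNReal.rpow_one]
        have hΦle : Φ x ≤ A ^ (1 / q) * Ψ x ^ (1 / r) := by
          calc Φ x = ∫⁻ y, (u * v) y :=
              lintegral_congr fun y => (huv y).symm
            _ ≤ (∫⁻ y, u y ^ q) ^ (1 / q) * (∫⁻ y, v y ^ r) ^ (1 / r) := hhold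
            _ = A ^ (1 / q) * Ψ x ^ (1 / r) := by
                congr 1
                · congr 1
                  exact lintegral_congr huq
                · congr 1
                  exact lintegral_congr hvr
        calc Φ x ^ r ≤ (A ^ (1 / q) * Ψ x ^ (1 / r)) ^ r :=
              ENNReal.rpow_le_rpow hΦle hr0.le
          _ = A ^ (r - 1) * Ψ x := by
              rw [ENNReal.mul_rpow_of_nonneg _ _ hr0.le, ← ENNReal.rpow_mul,
                ← ENNReal.rpow_mul, one_div_mul_cancel hr0.ne', ENNReal.rpow_one]
              congr 2
              rw [hq]
              field_simp
    have hArm1 : A ^ (r - 1) ≠ ∞ :=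
      ENNReal.rpow_ne_top_of_nonneg (by linarith) hAne
    have hmain : ∫⁻ x, Φ x ^ r ≤ A ^ r * B := by
      calc ∫⁻ x, Φ x ^ r ≤ ∫⁻ x, A ^ (r - 1) * Ψ x := lintegral_mono hΦΨ
        _ = A ^ (r - 1) * ∫⁻ x, Ψ x := lintegral_const_mul' _ _ hArm1
        _ = A ^ (r - 1) * (A * B) := by rw [hswap]
        _ = A ^ r * B := by
            have hAr : A ^ r = A ^ (r - 1) * A := by
              calc A ^ r = A ^ ((r - 1) + 1) := by rw [sub_add_cancel]
                _ = A ^ (r - 1) * A ^ (1:ℝ) :=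
                  ENNReal.rpow_add_of_nonneg _ _ (by linarith) zero_le_one
                _ = A ^ (r - 1) * A := by rw [ENNReal.rpow_one]
            rw [← mul_assoc, ← hAr]
    calc eLpNorm (fun x : ℝ =>
            (w x) • (if -1 ≤ x then ∫ y in Set.Ioi x, (V y : ℂ) * g (x - 2 * y) else 0))
          p volume
        = (∫⁻ x, (‖(w x) • (if -1 ≤ x then
            ∫ y in Set.Ioi x, (V y : ℂ) * g (x - 2 * y) else 0)‖₊ : ℝ≥0∞) ^ r) ^ (1 / r) :=
          eLpNorm_eq_lintegral_rpow_enorm_toReal hp0 hptop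
      _ ≤ (∫⁻ x, Φ x ^ r) ^ (1 / r) :=
          ENNReal.rpow_le_rpow (lintegral_mono fun x =>
            ENNReal.rpow_le_rpow (key x) hr0.le) (by positivity)
      _ ≤ (A ^ r * B) ^ (1 / r) := ENNReal.rpow_le_rpow hmain (by positivity)
      _ = A * B ^ (1 / r) := by
          rw [ENNReal.mul_rpow_of_nonneg _ _ (by positivity), ← ENNReal.rpow_mul,
            mul_one_div_cancel hr0.ne', ENNReal.rpow_one]
      _ = ENNReal.ofReal ((2:ℝ) ^ (γ / 2) * ∫ y, Real.sqrt (1 + y ^ 2) ^ γ * |V y|) *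
            eLpNorm g p volume := by rw [← hAeq, hgnorm]


/-- Weighted L^p bound for the error operator II^{(2,3)} (E³ bound in Theorem 4.2). -/
theorem weighted_convolution_Lp_bound (γ : ℝ) (hγ : 0 ≤ γ) (p : ENNReal) (hp : 1 ≤ p)
    (V : ℝ → ℝ) (hVmeas : Measurable V)
    (hVint : Integrable (fun y => Real.sqrt (1 + y ^ 2) ^ γ * |V y|))
    (g : ℝ → ℂ) (hg : MemLp g p volume) :
    MemLp (fun x : ℝ =>
        (Real.sqrt (1 + x ^ 2) ^ γ : ℝ) •
          (if -1 ≤ x then ∫ y in Set.Ioi x, (V y : ℂ) * g (x - 2 * y) else 0)) p volume ∧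
      eLpNorm (fun x : ℝ =>
          (Real.sqrt (1 + x ^ 2) ^ γ : ℝ) •
            (if -1 ≤ x then ∫ y in Set.Ioi x, (V y : ℂ) * g (x - 2 * y) else 0)) p volume ≤
        ENNReal.ofReal ((2:ℝ) ^ (γ / 2) * ∫ y, Real.sqrt (1 + y ^ 2) ^ γ * |V y|) *
          eLpNorm g p volume := by
  classical
  have hgm := hg.1
  set g' : ℝ → ℂ := hgm.mk g with hg'def
  have hg's : StronglyMeasurable g' := hgm.stronglyMeasurable_mk
  have hgg' : g =ᵐ[volume] g' := hgm.ae_eq_mk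
  have heq : ∀ x : ℝ, (∫ y in Set.Ioi x, (V y : ℂ) * g (x - 2 * y)) =
      ∫ y in Set.Ioi x, (V y : ℂ) * g' (x - 2 * y) := by
    intro x
    refine integral_congr_ae (ae_restrict_of_ae ?_)
    filter_upwards [(qmp_aux x).ae hgg'] with y hy
    rw [hy]
  have hFeq : (fun x : ℝ => (Real.sqrt (1 + x ^ 2) ^ γ : ℝ) •
      (if -1 ≤ x then ∫ y in Set.Ioi x, (V y : ℂ) * g (x - 2 * y) else 0)) =
      fun x : ℝ => (Real.sqrt (1 + x ^ 2) ^ γ : ℝ) •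
      (if -1 ≤ x then ∫ y in Set.Ioi x, (V y : ℂ) * g' (x - 2 * y) else 0) := by
    funext x
    rw [heq x]
  have hnorm_eq : eLpNorm g' p volume = eLpNorm g p volume :=
    eLpNorm_congr_ae hgg'.symm
  have hbound := core hγ hp hVmeas hVint hg's.measurable
  rw [hnorm_eq] at hbound
  constructor
  · refine ⟨?_, ?_⟩
    · rw [hFeq]
      exact (sm_aux hVmeas hg's.measurable γ).aestronglyMeasurable
    · rw [hFeq]
      exact lt_of_le_of_lt hbound
        (ENNReal.mul_lt_top ENNReal.ofReal_lt_top hg.2)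
  · rw [hFeq]
    exact hbound
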